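/- Let G be a graph and δ a surjective red-blue edge coloring such that there is a cycle C in G with exactly one edge e of one color and all other edges of the other color (an almost monochromatic cycle). Then some connected component of the subgraph induced by the edges of the majority color of C is not an induced subgraph of G. -/

import Mathlib

open SimpleGraph

def IsNACColoring {V : Type*} (G : SimpleGraph V) (δ : Sym2 V → Bool) : Prop :=
  (∃ e ∈ G.edgeSet, δ e = true) ∧ (∃ e ∈ G.edgeSet, δ e = false) ∧
  ∀ ⦃u : V⦄ (w : G.Walk u u), w.IsCycle →
    ∀ b : Bool, (w.edges.countP fun e => δ e == b) ≠ 1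

/-- The spanning subgraph of `G` consisting of the edges of color `c`. -/
def colorSubgraph {V : Type*} (G : SimpleGraph V) (δ : Sym2 V → Bool) (c : Bool) :
    SimpleGraph V :=
  SimpleGraph.fromEdgeSet {e | e ∈ G.edgeSet ∧ δ e = c}

/-! Let `s(x, y)` be the unique edge of colour `b` on the cycle. The rest of the cycle is a path
from `x` to `y` all of whose edges have colour `!b`, so `x` and `y` lie in one component of the
`!b`-subgraph although the edge joining them has colour `b`. -/

theorem List.exists_mem_forall_eq_of_countP_eq_one {α : Type*} {p : α → Bool} {l : List α}
    (h : l.countP p = 1) : ∃ a ∈ l, p a ∧ ∀ b ∈ l, p b → b = a := by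
  rw [List.countP_eq_length_filter, List.length_eq_one_iff] at h
  obtain ⟨a, ha⟩ := h
  have hmem : ∀ b, b ∈ l ∧ p b ↔ b = a := fun b => by
    simpa [ha] using (List.mem_filter (p := p) (as := l) (x := b)).symm
  exact ⟨a, ((hmem a).2 rfl).1, ((hmem a).2 rfl).2, fun b hb hpb => (hmem b).1 ⟨hb, hpb⟩⟩

namespace SimpleGraph

variable {V : Type*} {G H : SimpleGraph V}

theorem mem_edgeSet_colorSubgraph {δ : Sym2 V → Bool} {c : Bool} {e : Sym2 V} :
    e ∈ (colorSubgraph G δ c).edgeSet ↔ e ∈ G.edgeSet ∧ δ e = c := by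
  rw [colorSubgraph, edgeSet_fromEdgeSet]
  exact ⟨fun h => h.1, fun h => ⟨h, G.not_isDiag_of_mem_edgeSet h.1⟩⟩

/-- The cycle lives in `H ⊔ {s(x, y)}`, so `s(x, y)` is not a bridge there. -/
theorem Walk.IsCycle.reachable_of_forall_edges_mem {u x y : V} {w : G.Walk u u}
    (hw : w.IsCycle) (hxy : s(x, y) ∈ w.edges)
    (hH : ∀ e ∈ w.edges, e ≠ s(x, y) → e ∈ H.edgeSet) : H.Reachable x y := by
  set H' := H ⊔ fromEdgeSet {s(x, y)}
  have hedges : ∀ e ∈ w.edges, e ∈ H'.edgeSet := fun e he => by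
    rw [edgeSet_sup, edgeSet_fromEdgeSet]
    by_cases hexy : e = s(x, y)
    · exact Or.inr ⟨hexy, G.not_isDiag_of_mem_edgeSet (w.edges_subset_edgeSet he)⟩
    · exact Or.inl (hH e he hexy)
  obtain ⟨-, hreach⟩ := adj_and_reachable_delete_edges_iff_exists_cycle.mpr
    ⟨u, w.transfer H' hedges, hw.transfer hedges, by rwa [Walk.edges_transfer]⟩
  refine hreach.mono fun a c hac => ?_
  rw [deleteEdges, sdiff_adj, sup_adj] at hac
  exact hac.1.resolve_right hac.2

end SimpleGraph

theorem almost_cycle_component_not_induced_general {V : Type*} (G : SimpleGraph V)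
    (δ : Sym2 V → Bool)
    (u : V) (w : G.Walk u u) (hw : w.IsCycle) (b : Bool)
    (hone : (w.edges.countP fun e => δ e == b) = 1) :
    ∃ x y : V, G.Adj x y ∧ (colorSubgraph G δ (!b)).Reachable x y ∧ δ s(x, y) = b := by
  obtain ⟨e, he, heb, hunique⟩ := List.exists_mem_forall_eq_of_countP_eq_one hone
  induction e using Sym2.ind with
  | _ x y =>
    refine ⟨x, y, w.adj_of_mem_edges he, hw.reachable_of_forall_edges_mem he ?_, by simpa using heb⟩
    intro e' he' hne
    rw [mem_edgeSet_colorSubgraph, Bool.eq_not_iff]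
    exact ⟨w.edges_subset_edgeSet he', fun hb => hne (hunique e' he' (by simpa using hb))⟩

/-- if a surjective red-blue edge coloring admits an almost
monochromatic cycle (a cycle with exactly one edge of color `b`), then some connected
component of the subgraph of the edges of the majority color `!b` is not an induced
subgraph of `G`: there are vertices joined in `G` and connected in the majority-color
subgraph whose connecting edge has the minority color. -/
theorem almost_cycle_component_not_induced {V : Type*} (G : SimpleGraph V)
    (δ : Sym2 V → Bool)
    (hsurj : (∃ e ∈ G.edgeSet, δ e = true) ∧ (∃ e ∈ G.edgeSet, δ e = false))
    (u : V) (w : G.Walk u u) (hw : w.IsCycle) (b : Bool)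
    (hone : (w.edges.countP fun e => δ e == b) = 1) :
    ∃ x y : V, G.Adj x y ∧ (colorSubgraph G δ (!b)).Reachable x y ∧ δ s(x, y) = b :=
  almost_cycle_component_not_induced_general G δ u w hw b hone
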